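/- Exactly 22 of the 28 non-adjacent unordered vertex pairs of G_P are not a diagonal of any 4-belt of G_P. -/

import Mathlib

/-- Edge list of the facet-intersection graph `G_P` of the polytope `𝒫`
(vertices: a=0, b=1, c=2, d=3, e=4, f=5, g=6, h=7, i=8, j=9, k=10). -/
def pEdgeList : List (Fin 11 × Fin 11) :=
  [(0,1),(0,2),(0,3),(0,4),(1,2),(1,4),(1,5),(1,6),(2,3),(2,6),(2,7),(2,8),
   (3,4),(3,8),(4,5),(4,8),(4,9),(5,6),(5,9),(5,10),(6,7),(6,10),(7,8),(7,9),
   (7,10),(8,9),(9,10)]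

/-- The facet-intersection graph `G_P` of the polytope `𝒫`. -/
def G_P : SimpleGraph (Fin 11) where
  Adj u v := (u, v) ∈ pEdgeList ∨ (v, u) ∈ pEdgeList
  symm := ⟨fun u v h => h.symm⟩
  loopless := ⟨by intro v; fin_cases v <;> decide⟩

instance : DecidableRel G_P.Adj :=
  fun u v => inferInstanceAs (Decidable ((u, v) ∈ pEdgeList ∨ (v, u) ∈ pEdgeList))

/-- A 4-belt of a simple graph `G` is a 4-element vertex set that can be written as
`{w, x, y, z}` where `wx`, `xy`, `yz`, `zw` are edges of `G` while `wy`, `xz` are not. -/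
def IsFourBelt {V : Type*} (G : SimpleGraph V) (B : Set V) : Prop :=
  ∃ w x y z : V, B = {w, x, y, z} ∧ B.ncard = 4 ∧
    G.Adj w x ∧ G.Adj x y ∧ G.Adj y z ∧ G.Adj z w ∧ ¬ G.Adj w y ∧ ¬ G.Adj x z

/-- The pair `{u, v}` is a diagonal of the 4-belt `B` of `G`. -/
def IsDiagonalOfBelt {V : Type*} (G : SimpleGraph V) (u v : V) (B : Set V) : Prop :=
  ∃ w x y z : V, B = {w, x, y, z} ∧ B.ncard = 4 ∧
    G.Adj w x ∧ G.Adj x y ∧ G.Adj y z ∧ G.Adj z w ∧ ¬ G.Adj w y ∧ ¬ G.Adj x z ∧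
    (({u, v} : Set V) = {w, y} ∨ ({u, v} : Set V) = {x, z})

/-- The pair `{u, v}` is a diagonal of some 4-belt of `G`. -/
def IsBeltDiagonal {V : Type*} (G : SimpleGraph V) (u v : V) : Prop :=
  ∃ B : Set V, IsDiagonalOfBelt G u v B

/-!
A pair `{u, v}` is a diagonal of a 4-belt exactly when `u ≠ v` are non-adjacent and have two
distinct non-adjacent common neighbours `x, z` (the belt is then `u x v z`). This turns belt
diagonality into a decidable condition on `G_P`, and the count of pairs of `Fin 11` is then
evaluated by the kernel.
-/

theorem Set.ncard_quadruple_eq_four_iff {α : Type*} {w x y z : α} :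
    ({w, x, y, z} : Set α).ncard = 4 ↔ w ≠ x ∧ w ≠ y ∧ w ≠ z ∧ x ≠ y ∧ x ≠ z ∧ y ≠ z := by
  classical
  have hm : Multiset.card ({w, x, y, z} : Multiset α) = 4 := rfl
  rw [show ({w, x, y, z} : Set α) = ↑(Multiset.toFinset {w, x, y, z}) by ext; simp,
    Set.ncard_coe_finset, ← hm, Multiset.toFinset_card_eq_card_iff_nodup]
  simp [and_assoc]

theorem Set.ncard_setOf_pair_eq_card_image {α : Type*} [Fintype α] [DecidableEq α]
    (P : α → α → Prop) [DecidablePred fun q : α × α => P q.1 q.2] :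
    {p : Set α | ∃ u v, P u v ∧ p = {u, v}}.ncard =
      ((Finset.univ.filter fun q : α × α => P q.1 q.2).image
        fun q => ({q.1, q.2} : Finset α)).card := by
  rw [← Set.ncard_coe_finset, ← Set.ncard_image_of_injective _ Finset.coe_injective]
  congr 1
  ext p
  simp [eq_comm]

theorem isBeltDiagonal_iff {V : Type*} {G : SimpleGraph V} {u v : V} :
    IsBeltDiagonal G u v ↔ u ≠ v ∧ ¬ G.Adj u v ∧
      ∃ x ∈ G.commonNeighbors u v, ∃ z ∈ G.commonNeighbors u v, x ≠ z ∧ ¬ G.Adj x z := by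
  constructor
  · rintro ⟨B, w, x, y, z, rfl, hcard, hwx, hxy, hyz, hzw, hwy, hxz, hdiag⟩
    obtain ⟨-, hwy', -, -, hxz', -⟩ := Set.ncard_quadruple_eq_four_iff.mp hcard
    rcases hdiag with hdiag | hdiag <;>
      obtain ⟨rfl, rfl⟩ | ⟨rfl, rfl⟩ := Set.pair_eq_pair_iff.mp hdiag
    · exact ⟨hwy', hwy, x, ⟨hwx, hxy.symm⟩, z, ⟨hzw.symm, hyz⟩, hxz', hxz⟩
    · exact ⟨hwy'.symm, fun h => hwy h.symm, x, ⟨hxy.symm, hwx⟩, z, ⟨hyz, hzw.symm⟩, hxz', hxz⟩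
    · exact ⟨hxz', hxz, y, ⟨hxy, hyz.symm⟩, w, ⟨hwx.symm, hzw⟩, hwy'.symm, fun h => hwy h.symm⟩
    · exact ⟨hxz'.symm, fun h => hxz h.symm, y, ⟨hyz.symm, hxy⟩, w, ⟨hzw, hwx.symm⟩,
        hwy'.symm, fun h => hwy h.symm⟩
  · rintro ⟨huv, hnadj, x, ⟨hux, hvx⟩, z, ⟨huz, hvz⟩, hxz, hnxz⟩
    exact ⟨_, u, x, v, z, rfl,
      Set.ncard_quadruple_eq_four_iff.mpr ⟨hux.ne, huv, huz.ne, hvx.ne.symm, hxz, hvz.ne⟩,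
      hux, hvx.symm, hvz, huz.symm, hnadj, hnxz, Or.inl rfl⟩

/-- Exactly 22 of the 28 non-adjacent unordered vertex pairs of `G_P` are not a
diagonal of any 4-belt of `G_P`. -/
theorem stmt_8 :
    {p : Set (Fin 11) | ∃ u v : Fin 11, u ≠ v ∧ ¬ G_P.Adj u v ∧
        ¬ IsBeltDiagonal G_P u v ∧ p = {u, v}}.ncard = 22 := by
  simp only [isBeltDiagonal_iff, ← and_assoc]
  rw [Set.ncard_setOf_pair_eq_card_image]
  decide
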